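/- Let m be a squarefree monomial of degree d with strictly increasing factorization x_{i_1}⋯x_{i_d}, and let τ(m) = x_{i_1} x_{i_2−1}⋯x_{i_d−d+1}. Then for every i, the number of squarefree minimal generators of sfBorel(m) with maximal variable x_i equals the number of minimal generators of Borel(τ(m)) with maximal variable x_{i−d+1}; that is, w_i(sfBorel(m)) = w_{i−d+1}(Borel(τ(m))). -/

import Mathlib

/-- Minimal generators of `Borel(τ(m))` for `τ(m)` with factorization `J`:
weakly increasing positive sequences bounded termwise by `J`. -/
def borelGens (J : List ℕ) : Set (List ℕ) :=
  {l | l.length = J.length ∧ l.Chain' (· ≤ ·) ∧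
    ∀ t < l.length, 1 ≤ l.getD t 0 ∧ l.getD t 0 ≤ J.getD t 0}

/-- `w J j`: number of generators with maximal variable `x_j`. -/
noncomputable def w (J : List ℕ) (j : ℕ) : ℕ :=
  Set.ncard {l ∈ borelGens J | l.getLast? = some j}

/-- Squarefree minimal generators of `sfBorel(m)` for `m` with strictly
increasing factorization `I`: strictly increasing positive sequences bounded
termwise by `I`. -/
def sfBorelGens (I : List ℕ) : Set (List ℕ) :=
  {l | l.length = I.length ∧ l.Chain' (· < ·) ∧
    ∀ t < l.length, 1 ≤ l.getD t 0 ∧ l.getD t 0 ≤ I.getD t 0}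

/-- `sfw I i`: number of squarefree generators with maximal variable `x_i`. -/
noncomputable def sfw (I : List ℕ) (i : ℕ) : ℕ :=
  Set.ncard {l ∈ sfBorelGens I | l.getLast? = some i}

/-!
On exponent sequences `τ` is `subIndex`, subtracting `j` from the `j`-th entry (counting from
`0`); its inverse on strictly increasing sequences is `addIndex`. Adding the index turns a weakly
increasing sequence into a strictly increasing one and back, and turns the bound `a_j ≤ i_j - j`
into `a_j + j ≤ i_j`; positivity transfers because a weakly increasing sequence is positive as
soon as its first entry is. So `addIndex` maps the generators of `Borel(τ(m))` bijectively onto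
those of `sfBorel(m)`, and it sends a last entry `i - d + 1` to `i`.
-/

def subIndex (l : List ℕ) : List ℕ := l.mapIdx fun j a => a - j

def addIndex (l : List ℕ) : List ℕ := l.mapIdx fun j a => a + j

@[simp] theorem length_subIndex (l : List ℕ) : (subIndex l).length = l.length :=
  List.length_mapIdx

@[simp] theorem length_addIndex (l : List ℕ) : (addIndex l).length = l.length :=
  List.length_mapIdx

@[simp] theorem getElem_addIndex (l : List ℕ) (t : ℕ) (h : t < (addIndex l).length) :
    (addIndex l)[t] = l[t]'(by simpa using h) + t :=
  List.getElem_mapIdx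

theorem getD_subIndex (l : List ℕ) (t : ℕ) : (subIndex l).getD t 0 = l.getD t 0 - t := by
  simp only [subIndex, List.getD_eq_getElem?_getD, List.getElem?_mapIdx]
  cases l[t]? <;> simp

theorem subIndex_addIndex (l : List ℕ) : subIndex (addIndex l) = l := by
  simp only [subIndex, addIndex, List.mapIdx_mapIdx, Function.comp_def, Nat.add_sub_cancel]
  exact List.ext_getElem (by simp) (by simp)

theorem addIndex_injective : Function.Injective addIndex :=
  Function.LeftInverse.injective subIndex_addIndex

theorem le_getElem_of_isChain_lt {l : List ℕ} (hl : l.IsChain (· < ·)) :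
    ∀ t (h : t < l.length), t ≤ l[t]
  | 0, _ => Nat.zero_le _
  | t + 1, h => (le_getElem_of_isChain_lt hl t (by omega)).trans_lt
      (List.isChain_iff_getElem.1 hl t h)

theorem addIndex_subIndex {l : List ℕ} (hl : ∀ t (h : t < l.length), t ≤ l[t]) :
    addIndex (subIndex l) = l :=
  List.ext_getElem (by simp) fun t _ h => by
    simp only [getElem_addIndex, subIndex, List.getElem_mapIdx]
    have := hl t h
    omega

theorem isChain_lt_addIndex_iff {l : List ℕ} :
    (addIndex l).IsChain (· < ·) ↔ l.IsChain (· ≤ ·) := by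
  simp only [List.isChain_iff_getElem, length_addIndex, getElem_addIndex]
  exact forall₂_congr fun _ _ => by omega

theorem getD_addIndex {l : List ℕ} {t : ℕ} (ht : t < l.length) :
    (addIndex l).getD t 0 = l[t] + t := by
  rw [List.getD_eq_getElem _ _ (by simpa using ht), getElem_addIndex]

theorem addIndex_mem_sfBorelGens_iff {l I : List ℕ} :
    addIndex l ∈ sfBorelGens I ↔ l ∈ borelGens (subIndex I) := by
  simp only [sfBorelGens, borelGens, Set.mem_ofPred_eq, length_addIndex, length_subIndex,
    List.Chain', isChain_lt_addIndex_iff, getD_subIndex]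
  refine and_congr_right fun _ => and_congr_right fun hl => ?_
  calc (∀ t < l.length, 1 ≤ (addIndex l).getD t 0 ∧ (addIndex l).getD t 0 ≤ I.getD t 0)
      ↔ ∀ t (ht : t < l.length), 1 ≤ l[t] + t ∧ l[t] + t ≤ I.getD t 0 :=
        forall₂_congr fun t ht => by rw [getD_addIndex ht]
    _ ↔ ∀ t (ht : t < l.length), 1 ≤ l[t] ∧ l[t] ≤ I.getD t 0 - t := by
        refine ⟨fun h t ht => ?_, fun h t ht => ?_⟩
        · have h0 := h 0 (by omega)
          have hmono := hl.sortedLE.getElem_le_getElem_of_le (hi := by omega) (hj := ht)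
            (Nat.zero_le t)
          have := h t ht
          omega
        · have := h t ht
          omega
    _ ↔ ∀ t < l.length, 1 ≤ l.getD t 0 ∧ l.getD t 0 ≤ I.getD t 0 - t :=
        forall₂_congr fun t ht => by rw [List.getD_eq_getElem _ _ ht]

theorem sfBorelGens_eq_image_addIndex (I : List ℕ) :
    sfBorelGens I = addIndex '' borelGens (subIndex I) := by
  ext l
  refine ⟨fun hl => ?_, ?_⟩
  · have hl' : addIndex (subIndex l) = l := addIndex_subIndex (le_getElem_of_isChain_lt hl.2.1)
    exact ⟨subIndex l, addIndex_mem_sfBorelGens_iff.1 (by rwa [hl']), hl'⟩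
  · rintro ⟨a, ha, rfl⟩
    exact addIndex_mem_sfBorelGens_iff.2 ha

theorem one_le_of_mem_borelGens {l J : List ℕ} (hl : l ∈ borelGens J) : ∀ x ∈ l, 1 ≤ x := by
  intro x hx
  obtain ⟨t, ht, rfl⟩ := List.mem_iff_getElem.1 hx
  simpa only [List.getD_eq_getElem _ _ ht] using (hl.2.2 t ht).1

theorem getLast?_addIndex_eq_some_iff {l : List ℕ} (hl : ∀ x ∈ l, 1 ≤ x) {i : ℕ} :
    (addIndex l).getLast? = some i ↔ l.getLast? = some (i + 1 - l.length) := by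
  rw [addIndex, List.getLast?_mapIdx]
  cases h : l.getLast? with
  | none => simp
  | some x =>
    have hx := hl x (List.mem_of_getLast? h)
    have hlen := List.length_pos_of_mem (List.mem_of_getLast? h)
    simp only [Option.map_some, Option.some.injEq]
    omega

theorem sf_w_eq_w_tau_general (I : List ℕ) (d : ℕ) (hd : I.length = d) (i : ℕ) :
    sfw I i = w (I.mapIdx (fun j a => a - j)) (i + 1 - d) := by
  show sfw I i = w (subIndex I) (i + 1 - d)
  have hlast : ∀ a ∈ borelGens (subIndex I),
      (addIndex a).getLast? = some i ↔ a.getLast? = some (i + 1 - d) := fun a ha => by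
    rw [getLast?_addIndex_eq_some_iff (one_le_of_mem_borelGens ha), ha.1, length_subIndex, hd]
  have key : {l ∈ sfBorelGens I | l.getLast? = some i} =
      addIndex '' {a ∈ borelGens (subIndex I) | a.getLast? = some (i + 1 - d)} := by
    rw [sfBorelGens_eq_image_addIndex]
    ext l
    constructor
    · rintro ⟨⟨a, ha, rfl⟩, hl⟩
      exact ⟨a, ⟨ha, (hlast a ha).1 hl⟩, rfl⟩
    · rintro ⟨a, ⟨ha, hl⟩, rfl⟩
      exact ⟨⟨a, ha, rfl⟩, (hlast a ha).2 hl⟩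
  rw [sfw, w, key, Set.ncard_image_of_injective _ addIndex_injective]

/-- For a squarefree monomial `m` of degree `d` with factorization
`I = (i_1 < ⋯ < i_d)` and `τ(m) = x_{i_1} x_{i_2-1} ⋯ x_{i_d-d+1}`, we have
`w_i(sfBorel(m)) = w_{i-d+1}(Borel(τ(m)))` for every `i` (both sides vanish
when `i - d + 1 ≤ 0`; `i + 1 - d` is the truncated subtraction). -/
theorem sf_w_eq_w_tau (I : List ℕ) (hI : I.Chain' (· < ·))
    (hpos : ∀ x ∈ I, 1 ≤ x) (d : ℕ) (hd : I.length = d) (hd1 : 1 ≤ d) (i : ℕ) :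
    sfw I i = w (I.mapIdx (fun j a => a - j)) (i + 1 - d) :=
  sf_w_eq_w_tau_general I d hd i
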